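/- For a set z = (z₁,…,z_M) of nonzero complex numbers with z_i + z_j ≠ 0 for i ≠ j, the quantity Δ^B(z) = ∏_{i<j} (z_i − z_j)/(z_i + z_j) is invariant under the involution z*_i = −z_{M−i+1}^{−1}: Δ^B(z*) = Δ^B(z). -/
import Mathlib


/-- `Δᴮ(z*) = Δᴮ(z)` where `Δᴮ(z) = ∏_{i<j} (zᵢ-zⱼ)/(zᵢ+zⱼ)` and `z*ᵢ = -z_{M-i+1}⁻¹`. -/
theorem deltaB_star (M : ℕ) (z : Fin M → ℂ) (hz : ∀ i, z i ≠ 0)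
    (h : ∀ i j, i ≠ j → z i + z j ≠ 0) :
    (∏ i : Fin M, ∏ j ∈ Finset.Ioi i,
        ((-(z i.rev)⁻¹) - (-(z j.rev)⁻¹)) / ((-(z i.rev)⁻¹) + (-(z j.rev)⁻¹))) =
      ∏ i : Fin M, ∏ j ∈ Finset.Ioi i, (z i - z j) / (z i + z j) := by
  have step1 : (∏ i : Fin M, ∏ j ∈ Finset.Ioi i,
        ((-(z i.rev)⁻¹) - (-(z j.rev)⁻¹)) / ((-(z i.rev)⁻¹) + (-(z j.rev)⁻¹))) =
      ∏ i : Fin M, ∏ j ∈ Finset.Ioi i, (z j.rev - z i.rev) / (z j.rev + z i.rev) := by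
    refine Finset.prod_congr rfl fun i _ => Finset.prod_congr rfl fun j hj => ?_
    have hij : i < j := Finset.mem_Ioi.mp hj
    have hne : j.rev ≠ i.rev := by
      simp only [ne_eq, Fin.rev_inj]
      exact hij.ne'
    have ha := hz i.rev
    have hb := hz j.rev
    have hab := h j.rev i.rev hne
    have hden : -(z i.rev)⁻¹ + -(z j.rev)⁻¹ ≠ 0 := by
      rw [← neg_add, neg_ne_zero]
      intro hc
      apply hab
      field_simp at hc
      linear_combination hc
    rw [div_eq_div_iff hden hab]
    field_simp
    ring
  rw [step1, Finset.prod_sigma', Finset.prod_sigma']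
  refine Finset.prod_nbij' (fun p => ⟨p.2.rev, p.1.rev⟩) (fun p => ⟨p.2.rev, p.1.rev⟩)
    ?_ ?_ ?_ ?_ ?_
  · rintro ⟨i, j⟩ hp
    simp only [Finset.mem_sigma, Finset.mem_univ, Finset.mem_Ioi, true_and] at hp ⊢
    exact Fin.rev_lt_rev.mpr hp
  · rintro ⟨i, j⟩ hp
    simp only [Finset.mem_sigma, Finset.mem_univ, Finset.mem_Ioi, true_and] at hp ⊢
    exact Fin.rev_lt_rev.mpr hp
  · rintro ⟨i, j⟩ _
    simp [Fin.rev_rev]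
  · rintro ⟨i, j⟩ _
    simp [Fin.rev_rev]
  · rintro ⟨i, j⟩ _
    simp [Fin.rev_rev]
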